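/- arXiv:2105.04852 — 2 statements merged into one kernel-verified Lean document; each statement's English description precedes it below -/
import Mathlib

section
/- Let L > 0, 0 < D ≤ L, k ≥ 1, and let c*, c ∈ Ω^k be two codebooks with all centroids in A_L and satisfying ‖c_j* − ∂Ω‖ ≥ D and ‖c_j − ∂Ω‖ ≥ D for all 1 ≤ j ≤ k. Let x ∈ A_L and 1 ≤ j ≤ k. If x ∈ V_j(c*) ∩ V_{k+1}(c), then the Euclidean distance from x to the topological boundary of V_j(c*) is at most (7L²/(2D²))·‖c* − c‖. Symmetrically, if x ∈ V_{k+1}(c*) ∩ V_j(c), then the distance from x to the topological boundary of V_{k+1}(c*) is at most (7L²/(2D²))·‖c* − c‖. Here ‖c* − c‖ denotes the Euclidean norm of the difference of the codebooks viewed as vectors in ℝ^{2k}. -/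
/-!
Write `s = ‖x − ∂Ω‖`, `a = c*_j`, `g = ‖x − a‖` and `δ = ‖c*_j − c_j‖`; by the triangle
inequality `‖x − c_j‖` and `g` differ by at most `δ`.

If `x ∈ V_j(c*) ∩ V_{k+1}(c)`, then `g < s ≤ g + δ`. Sliding `x` perpendicularly towards the
diagonal by `t` changes `‖· − ∂Ω‖² − ‖· − a‖²` by `−2t‖a − ∂Ω‖`, so after
`t = (s² − g²)/(2‖a − ∂Ω‖) ≤ Lδ/D` the point is equidistant from `a` and `∂Ω`, hence has left
`V_j(c*)`.

If `x ∈ V_{k+1}(c*) ∩ V_j(c)`, then `s ≤ g < s + δ`. Along the segment from `x` to `a` the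
difference `‖· − ∂Ω‖ − ‖· − a‖` is affine, starting at `s − g > −δ` and ending at
`‖a − ∂Ω‖ ≥ D`; since `g ≤ √2 L`, it becomes positive, i.e. the point leaves `V_{k+1}(c*)`,
after a step of length `√2 Lδ/D`.
-/

open MeasureTheory ENNReal Set

noncomputable section

abbrev E2 := EuclideanSpace ℝ (Fin 2)

/-- The open half-plane `Ω` above the diagonal. -/
def Omega : Set E2 := {x | x 0 < x 1}

/-- The diagonal `∂Ω`. -/
def diagSet : Set E2 := {x | x 0 = x 1}

/-- `Ω̄ = Ω ∪ ∂Ω`. -/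
def OmegaBar : Set E2 := Omega ∪ diagSet

/-- Euclidean distance of a point to the diagonal. -/
def dDiag (x : E2) : ℝ := Metric.infDist x diagSet

/-- Total persistence `Pers_p(μ) = ∫_Ω ‖x-∂Ω‖^p dμ(x)`. -/
def Pers (p : ℝ) (μ : Measure E2) : ℝ≥0∞ :=
  ∫⁻ x in Omega, ENNReal.ofReal (dDiag x ^ p) ∂μ

/-- Admissible partial transport plans: measures on `Ω̄ × Ω̄` whose first (resp. second)
marginal coincides with `μ` (resp. `ν`) on `Ω`. -/
def Adm (μ ν : Measure E2) : Set (Measure (E2 × E2)) :=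
  {π | (π.map Prod.fst).restrict Omega = μ.restrict Omega ∧
       (π.map Prod.snd).restrict Omega = ν.restrict Omega ∧
       π ((OmegaBar ×ˢ OmegaBar)ᶜ) = 0}

/-- `OT_p(μ,ν)^p`, the optimal partial transport cost. -/
def OTpow (p : ℝ) (μ ν : Measure E2) : ℝ≥0∞ :=
  ⨅ π ∈ Adm μ ν, ∫⁻ z, ENNReal.ofReal (dist z.1 z.2 ^ p) ∂π

/-- The distance `OT_p(μ,ν)`. -/
def OTp (p : ℝ) (μ ν : Measure E2) : ℝ≥0∞ := (OTpow p μ ν) ^ (1/p)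

/-- The closed ℓ¹-ball `A_L` of radius `L/√2` centered at `(-L/√8, L/√8)`. -/
def ballA (L : ℝ) : Set E2 :=
  {x | |x 0 + L / Real.sqrt 8| + |x 1 - L / Real.sqrt 8| ≤ L / Real.sqrt 2}

/-- Membership in `M^q_{L,M}`: supported in `Ω`, in `A_L`, with `Pers_q ≤ M`. -/
def MemMq (q L M : ℝ) (μ : Measure E2) : Prop :=
  μ Omegaᶜ = 0 ∧ μ (ballA L)ᶜ = 0 ∧ Pers q μ ≤ ENNReal.ofReal M

/-- Empirical EPD `μ̄_n = (1/n)(μ₁ + ⋯ + μ_n)` of a sample of `n` persistence measures. -/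
def empEPD (n : ℕ) (ω : Fin n → Measure E2) : Measure E2 :=
  (n : ℝ≥0∞)⁻¹ • ∑ i : Fin n, ω i

/-- Distance from `x` to the `j`-th centroid, the last index standing for the diagonal. -/
def cdistC (k : ℕ) (c : Fin k → E2) (j : Fin (k+1)) (x : E2) : ℝ :=
  if h : (j : ℕ) < k then dist x (c ⟨j, h⟩) else dDiag x

/-- Voronoi cells `V_j(c)` (the last cell being the diagonal cell `V_{k+1}`). -/
def Vcell (k : ℕ) (c : Fin k → E2) (j : Fin (k+1)) : Set E2 :=
  {x ∈ Omega | (∀ j' : Fin (k+1), j' < j → cdistC k c j x ≤ cdistC k c j' x) ∧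
               (∀ j' : Fin (k+1), j < j' → cdistC k c j x < cdistC k c j' x)}

/-- The distortion `R_{k,p}(c)`. -/
def distortion (p : ℝ) (μ : Measure E2) (k : ℕ) (c : Fin k → E2) : ℝ≥0∞ :=
  (∑ j : Fin (k+1), ∫⁻ x in Vcell k c j, ENNReal.ofReal (cdistC k c j x ^ p) ∂μ) ^ (1/p)

/-- The optimal distortion `R_k^* = inf {R_{k,p}(c) : c ∈ Ω̄^k}`. -/
def Rstar (p : ℝ) (μ : Measure E2) (k : ℕ) : ℝ≥0∞ :=
  ⨅ (c : Fin k → E2) (_ : ∀ j, c j ∈ OmegaBar), distortion p μ k c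

/-- The set `C_k` of optimal codebooks. -/
def Copt (p : ℝ) (μ : Measure E2) (k : ℕ) : Set (Fin k → E2) :=
  {c | (∀ j, c j ∈ OmegaBar) ∧ distortion p μ k c = Rstar p μ k}

/-- Support of a measure. -/
def msupport (μ : Measure E2) : Set E2 :=
  {x | ∀ U : Set E2, IsOpen U → x ∈ U → 0 < μ U}

/-- Euclidean distance between codebooks seen as vectors of `ℝ^{2k}`. -/
def cbDist (k : ℕ) (c c' : Fin k → E2) : ℝ :=
  Real.sqrt (∑ j : Fin k, dist (c j) (c' j) ^ 2)

/-- Euclidean norm on `(ℝ²)^k`. -/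
def pnorm2 (k : ℕ) (v : Fin k → E2) : ℝ := Real.sqrt (∑ j : Fin k, ‖v j‖ ^ 2)

/-- Distance between the `j`-th and `j'`-th centroids, the last index standing
for the diagonal. -/
def cdistPt (k : ℕ) (c : Fin k → E2) (j j' : Fin (k+1)) : ℝ :=
  if h : (j : ℕ) < k then
    (if h' : (j' : ℕ) < k then dist (c ⟨j, h⟩) (c ⟨j', h'⟩) else dDiag (c ⟨j, h⟩))
  else (if h' : (j' : ℕ) < k then dDiag (c ⟨j', h'⟩) else 0)

/-- The set `N(c)` of points lying on a boundary between two Voronoi cells. -/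
def Nset (k : ℕ) (c : Fin k → E2) : Set E2 :=
  {x ∈ Omega | ∃ j j' : Fin (k+1), j < j' ∧ x ∈ Vcell k c j ∧ cdistC k c j x = cdistC k c j' x}

/-- The `t`-neighborhood `A^t` of `A` in `Ω`. -/
def tN (A : Set E2) (t : ℝ) : Set E2 := {x ∈ Omega | ∃ a ∈ A, dist x a ≤ t}

/-- `w₂(c, m)_j = ∫_{V_j(c)} x dm(x)`. -/
def w2 (k : ℕ) (c : Fin k → E2) (m : Measure E2) (j : Fin k) : E2 :=
  ∫ x in Vcell k c j.castSucc, x ∂m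

/-- Absolute difference in `ℝ≥0∞`. -/
def eabs (a b : ℝ≥0∞) : ℝ≥0∞ := (a - b) + (b - a)

open Set Metric

lemma Metric.infDist_frontier_le_dist {E : Type*} [NormedAddCommGroup E] [NormedSpace ℝ E]
    [FiniteDimensional ℝ E] {s : Set E} {x y : E} (hx : x ∈ s) (hy : y ∉ s) :
    infDist x (frontier s) ≤ dist x y := by
  obtain ⟨z, hz, hxz⟩ :=
    exists_mem_frontier_infDist_compl_eq_dist hx (ne_univ_iff_exists_notMem s |>.2 ⟨y, hy⟩)
  calc infDist x (frontier s) ≤ dist x z := infDist_le_dist_of_mem hz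
    _ = infDist x sᶜ := hxz.symm
    _ ≤ dist x y := infDist_le_dist_of_mem hy

lemma E2.dist_sq (x y : E2) : dist x y ^ 2 = (x 0 - y 0) ^ 2 + (x 1 - y 1) ^ 2 := by
  rw [EuclideanSpace.dist_eq, Real.sq_sqrt (by positivity), Fin.sum_univ_two,
    Real.dist_eq, Real.dist_eq, sq_abs, sq_abs]

lemma dDiag_eq (x : E2) : dDiag x = |x 1 - x 0| / √2 := by
  have hdist : |x 1 - x 0| / √2 = √((x 1 - x 0) ^ 2 / 2) := by
    rw [Real.sqrt_div' _ zero_le_two, Real.sqrt_sq_eq_abs]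
  set m : ℝ := (x 0 + x 1) / 2
  have hm : (!₂[m, m] : E2) ∈ diagSet := rfl
  apply le_antisymm
  · -- the foot of the perpendicular from `x` to the diagonal
    refine (infDist_le_dist_of_mem hm).trans_eq ?_
    rw [← Real.sqrt_sq dist_nonneg, E2.dist_sq, hdist]
    congr 1
    simp only [m, Matrix.cons_val_zero, Matrix.cons_val_one]
    ring
  · refine (le_infDist ⟨_, hm⟩).2 fun p (hp : p 0 = p 1) => ?_
    rw [← Real.sqrt_sq dist_nonneg, E2.dist_sq, hdist]
    apply Real.sqrt_le_sqrt
    rw [hp]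
    nlinarith [sq_nonneg (x 0 + x 1 - 2 * p 1)]

lemma dDiag_of_mem_Omega {x : E2} (hx : x ∈ Omega) : dDiag x = (x 1 - x 0) / √2 := by
  rw [dDiag_eq, abs_of_pos (sub_pos.2 hx)]

lemma dDiag_pos_of_mem_Omega {a : E2} (ha : a ∈ Omega) : 0 < dDiag a := by
  rw [dDiag_of_mem_Omega ha]
  exact div_pos (sub_pos.2 ha) (by positivity)

lemma mem_ballA_iff {L : ℝ} {x : E2} :
    x ∈ ballA L ↔ |x 0 + L / √2 / 2| + |x 1 - L / √2 / 2| ≤ L / √2 := by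
  have h8 : √8 = 2 * √2 := by
    rw [show (8 : ℝ) = 2 ^ 2 * 2 by norm_num, Real.sqrt_mul (by norm_num),
      Real.sqrt_sq (by norm_num)]
  rw [ballA, mem_ofPred_eq, h8, div_mul_eq_div_div_swap]

lemma abs_sub_add_abs_sub_le_of_mem_ballA {L : ℝ} {x z : E2} (hx : x ∈ ballA L)
    (hz : z ∈ ballA L) : |x 0 - z 0| + |x 1 - z 1| ≤ √2 * L := by
  rw [mem_ballA_iff] at hx hz
  set ρ := L / √2
  have h0 := abs_sub (x 0 + ρ / 2) (z 0 + ρ / 2)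
  have h1 := abs_sub (x 1 - ρ / 2) (z 1 - ρ / 2)
  rw [add_sub_add_right_eq_sub] at h0
  rw [sub_sub_sub_cancel_right] at h1
  have : 2 * ρ = √2 * L := by rw [mul_div_left_comm, Real.div_sqrt, mul_comm]
  linarith

lemma dist_le_of_mem_ballA {L : ℝ} {x z : E2} (hx : x ∈ ballA L) (hz : z ∈ ballA L) :
    dist x z ≤ √2 * L := by
  refine le_trans ?_ (abs_sub_add_abs_sub_le_of_mem_ballA hx hz)
  rw [← Real.sqrt_sq dist_nonneg, E2.dist_sq]
  refine Real.sqrt_le_iff.2 ⟨by positivity, ?_⟩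
  nlinarith [sq_abs (x 0 - z 0), sq_abs (x 1 - z 1), abs_nonneg (x 0 - z 0),
    abs_nonneg (x 1 - z 1)]

lemma dDiag_le_of_mem_ballA {L : ℝ} {x : E2} (hx : x ∈ ballA L) : dDiag x ≤ L := by
  rw [mem_ballA_iff] at hx
  set ρ := L / √2
  have hρ : 0 ≤ ρ := by linarith [abs_nonneg (x 0 + ρ / 2), abs_nonneg (x 1 - ρ / 2)]
  have : |x 1 - x 0| ≤ 2 * ρ := by
    rw [abs_le]
    constructor <;> linarith [le_abs_self (x 0 + ρ / 2), neg_abs_le (x 0 + ρ / 2),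
      le_abs_self (x 1 - ρ / 2), neg_abs_le (x 1 - ρ / 2)]
  rw [dDiag_eq, div_le_iff₀ (by positivity)]
  calc |x 1 - x 0| ≤ 2 * ρ := this
    _ = L * √2 := by rw [mul_div_left_comm, Real.div_sqrt]

lemma cdistC_castSucc (k : ℕ) (c : Fin k → E2) (j : Fin k) (x : E2) :
    cdistC k c j.castSucc x = dist x (c j) := by
  simp [cdistC]

lemma cdistC_last (k : ℕ) (c : Fin k → E2) (x : E2) : cdistC k c (Fin.last k) x = dDiag x := by
  simp [cdistC]

lemma dist_lt_dDiag_of_mem_Vcell {k : ℕ} {c : Fin k → E2} {j : Fin k} {x : E2}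
    (hx : x ∈ Vcell k c j.castSucc) : dist x (c j) < dDiag x := by
  simpa only [cdistC_castSucc, cdistC_last] using hx.2.2 (Fin.last k) (Fin.castSucc_lt_last j)

lemma dDiag_le_dist_of_mem_Vcell_last {k : ℕ} {c : Fin k → E2} {x : E2}
    (hx : x ∈ Vcell k c (Fin.last k)) (j : Fin k) : dDiag x ≤ dist x (c j) := by
  simpa only [cdistC_castSucc, cdistC_last] using hx.2.1 j.castSucc (Fin.castSucc_lt_last j)

lemma dist_le_cbDist (k : ℕ) (c c' : Fin k → E2) (j : Fin k) :
    dist (c j) (c' j) ≤ cbDist k c c' :=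
  (le_abs_self _).trans <| Real.abs_le_sqrt <|
    Finset.single_le_sum (f := fun i => dist (c i) (c' i) ^ 2) (fun _ _ => sq_nonneg _)
      (Finset.mem_univ j)

lemma exists_dist_eq_dDiag_of_dist_le {x a : E2} (hx : x ∈ Omega) (ha : a ∈ Omega)
    (hxa : dist x a ≤ dDiag x) :
    ∃ y, dist y a = dDiag y ∧ dist x y = (dDiag x ^ 2 - dist x a ^ 2) / (2 * dDiag a) := by
  have hw : √2 ^ 2 = 2 := Real.sq_sqrt zero_le_two
  have hxs : x 1 - x 0 = √2 * dDiag x := by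
    rw [dDiag_of_mem_Omega hx, mul_div_cancel₀ _ (by positivity)]
  have had : a 1 - a 0 = √2 * dDiag a := by
    rw [dDiag_of_mem_Omega ha, mul_div_cancel₀ _ (by positivity)]
  have hd : 0 < dDiag a := dDiag_pos_of_mem_Omega ha
  have hg : dist x a ^ 2 = (x 0 - a 0) ^ 2 + (x 1 - a 1) ^ 2 := E2.dist_sq x a
  set s := dDiag x
  set g := dist x a
  set d := dDiag a
  set t := (s ^ 2 - g ^ 2) / (2 * d)
  have hsdg : (s - d) ^ 2 ≤ g ^ 2 := by
    have : 2 * (s - d) ^ 2 = ((x 1 - a 1) - (x 0 - a 0)) ^ 2 := by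
      linear_combination (-(s - d) ^ 2) * hw
        - ((x 1 - a 1) - (x 0 - a 0) + √2 * (s - d)) * (hxs - had)
    nlinarith [sq_nonneg ((x 1 - a 1) + (x 0 - a 0))]
  have ht : 0 ≤ t := div_nonneg (by nlinarith [dist_nonneg (x := x) (y := a)]) (by positivity)
  have hts : t ≤ s := by
    rw [div_le_iff₀ (by positivity)]
    nlinarith
  have htd : t * (2 * d) = s ^ 2 - g ^ 2 := div_mul_cancel₀ _ (by positivity)
  clear_value t
  -- move `x` by `t` perpendicularly towards the diagonal: `t / √2 = √2 * t / 2` in each coordinate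
  refine ⟨!₂[x 0 + √2 * t / 2, x 1 - √2 * t / 2], ?_, ?_⟩
  · have hy : dDiag !₂[x 0 + √2 * t / 2, x 1 - √2 * t / 2] = s - t := by
      rw [dDiag_eq]
      simp only [Matrix.cons_val_zero, Matrix.cons_val_one]
      rw [show x 1 - √2 * t / 2 - (x 0 + √2 * t / 2) = √2 * (s - t) by linear_combination hxs,
        abs_of_nonneg (by nlinarith [Real.sqrt_nonneg 2]), mul_div_cancel_left₀ _ (by positivity)]
    rw [hy, ← pow_left_inj₀ dist_nonneg (sub_nonneg.2 hts) two_ne_zero, E2.dist_sq]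
    simp only [Matrix.cons_val_zero, Matrix.cons_val_one]
    linear_combination (-1) * hg - √2 * t * hxs + √2 * t * had + htd
      + (t ^ 2 / 2 - t * (s - d)) * hw
  · rw [← pow_left_inj₀ dist_nonneg ht two_ne_zero, E2.dist_sq]
    simp only [Matrix.cons_val_zero, Matrix.cons_val_one]
    linear_combination t ^ 2 / 2 * hw

lemma dDiag_sub_dist_lineMap {x a : E2} (hx : x ∈ Omega) (ha : a ∈ Omega) {θ : ℝ} (h0 : 0 ≤ θ)
    (h1 : θ ≤ 1) :
    dDiag (AffineMap.lineMap x a θ) - dist (AffineMap.lineMap x a θ) a =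
      (1 - θ) * (dDiag x - dist x a) + θ * dDiag a := by
  have hlin : ∀ i, (AffineMap.lineMap x a θ : E2) i = (1 - θ) * x i + θ * a i := fun i => by
    simp only [AffineMap.lineMap_apply_module, PiLp.add_apply, PiLp.smul_apply, smul_eq_mul]
  have hy : dDiag (AffineMap.lineMap x a θ) = (1 - θ) * dDiag x + θ * dDiag a := by
    have hx' : x 0 < x 1 := hx
    have ha' : a 0 < a 1 := ha
    rw [dDiag_of_mem_Omega hx, dDiag_of_mem_Omega ha, dDiag_eq, hlin, hlin,
      abs_of_nonneg (by nlinarith)]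
    ring
  rw [hy, dist_lineMap_right, Real.norm_eq_abs, abs_of_nonneg (sub_nonneg.2 h1)]
  ring

lemma infDist_frontier_Vcell_castSucc_le {k : ℕ} {c : Fin k → E2} {j : Fin k} {L D : ℝ}
    {x b : E2} (hD : 0 < D) (hcD : D ≤ dDiag (c j)) (hc : c j ∈ Omega) (hx : x ∈ ballA L)
    (hxc : x ∈ Vcell k c j.castSucc) (hxb : dDiag x ≤ dist x b) :
    infDist x (frontier (Vcell k c j.castSucc)) ≤ L / D * dist (c j) b := by
  have hlt := dist_lt_dDiag_of_mem_Vcell hxc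
  obtain ⟨y, hya, hxy⟩ := exists_dist_eq_dDiag_of_dist_le hxc.1 hc hlt.le
  have hy : y ∉ Vcell k c j.castSucc := fun hy => (dist_lt_dDiag_of_mem_Vcell hy).ne hya
  have hsL : dDiag x ≤ L := dDiag_le_of_mem_ballA hx
  have hsg : dDiag x - dist x (c j) ≤ dist (c j) b := by linarith [dist_triangle x (c j) b]
  have hg : 0 ≤ dist x (c j) := dist_nonneg
  calc infDist x (frontier (Vcell k c j.castSucc)) ≤ dist x y := infDist_frontier_le_dist hxc hy
    _ = (dDiag x ^ 2 - dist x (c j) ^ 2) / (2 * dDiag (c j)) := hxy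
    _ ≤ 2 * L * dist (c j) b / (2 * dDiag (c j)) := by
      refine div_le_div_of_nonneg_right ?_ (by linarith)
      nlinarith [mul_le_mul (by linarith : dDiag x + dist x (c j) ≤ 2 * L) hsg (by linarith)
        (by linarith)]
    _ ≤ 2 * L * dist (c j) b / (2 * D) := by gcongr; nlinarith [dist_nonneg (x := c j) (y := b)]
    _ = L / D * dist (c j) b := by field_simp

lemma infDist_frontier_Vcell_last_le {k : ℕ} {c : Fin k → E2} {j : Fin k} {L D : ℝ}
    {x b : E2} (hD : 0 < D) (hcD : D ≤ dDiag (c j)) (hc : c j ∈ Omega ∩ ballA L)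
    (hx : x ∈ ballA L) (hxc : x ∈ Vcell k c (Fin.last k)) (hxb : dist x b < dDiag x) :
    infDist x (frontier (Vcell k c (Fin.last k))) ≤ √2 * L / D * dist (c j) b := by
  have hout : ∀ y, dist y (c j) < dDiag y → y ∉ Vcell k c (Fin.last k) :=
    fun y hy hmem => (dDiag_le_dist_of_mem_Vcell_last hmem j).not_gt hy
  have hsg : dDiag x ≤ dist x (c j) := dDiag_le_dist_of_mem_Vcell_last hxc j
  have hgs : dist x (c j) - dDiag x < dist (c j) b := by
    linarith [dist_triangle x b (c j), dist_comm (c j) b]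
  have hs : 0 < dDiag x := dist_nonneg.trans_lt hxb
  have hgL : dist x (c j) ≤ √2 * L := dist_le_of_mem_ballA hx hc.2
  have hL : 0 < L := hs.trans_le (dDiag_le_of_mem_ballA hx)
  set a := c j
  set g := dist x a
  set δ := dist a b
  set B := √2 * L / D * δ
  have hB : 0 ≤ B := by positivity
  have hBD : B * D = √2 * L * δ := by
    simp only [B]
    field_simp
  rcases le_or_gt g B with hgB | hBg
  · have ha : a ∉ Vcell k c (Fin.last k) :=
      hout a (by rw [dist_self]; exact dDiag_pos_of_mem_Omega hc.1)
    exact (infDist_frontier_le_dist hxc ha).trans hgB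
  -- otherwise step from `x` towards `a` by `B`
  have hg : 0 < g := hs.trans_le hsg
  set θ := B / g
  have hθ0 : 0 ≤ θ := div_nonneg hB hg.le
  have hθ1 : θ ≤ 1 := (div_le_one hg).2 hBg.le
  have hθg : θ * g = B := div_mul_cancel₀ _ hg.ne'
  have hy : dist (AffineMap.lineMap x a θ) a < dDiag (AffineMap.lineMap x a θ) := by
    rw [← sub_pos, dDiag_sub_dist_lineMap hxc.1 hc.1 hθ0 hθ1]
    have hpos : 0 < (g - B) * (dDiag x - g) + B * dDiag a := by
      nlinarith [mul_le_mul_of_nonneg_left hcD hB, mul_lt_mul_of_pos_left hgs hg,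
        mul_le_mul_of_nonneg_right hgL (dist_nonneg : 0 ≤ δ), mul_nonneg hB (sub_nonneg.2 hsg)]
    have hmul : g * ((1 - θ) * (dDiag x - g) + θ * dDiag a) =
        (g - B) * (dDiag x - g) + B * dDiag a := by
      rw [← hθg]; ring
    exact pos_of_mul_pos_right (hmul ▸ hpos) hg.le
  calc infDist x (frontier (Vcell k c (Fin.last k))) ≤ dist x (AffineMap.lineMap x a θ) :=
        infDist_frontier_le_dist hxc (hout _ hy)
    _ = B := by rw [dist_left_lineMap, Real.norm_eq_abs, abs_of_nonneg hθ0, hθg]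

theorem statement10_general (L D : ℝ) (hD : 0 < D) (hDL : D ≤ L)
    (k : ℕ) (cstar c : Fin k → E2)
    (hcs : ∀ j, cstar j ∈ Omega ∩ ballA L)
    (hcsD : ∀ j, D ≤ dDiag (cstar j))
    (x : E2) (hx : x ∈ ballA L) (j : Fin k) :
    (x ∈ Vcell k cstar j.castSucc ∩ Vcell k c (Fin.last k) →
      Metric.infDist x (frontier (Vcell k cstar j.castSucc)) ≤
        7 * L ^ 2 / (2 * D ^ 2) * cbDist k cstar c) ∧
    (x ∈ Vcell k cstar (Fin.last k) ∩ Vcell k c j.castSucc →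
      Metric.infDist x (frontier (Vcell k cstar (Fin.last k))) ≤
        7 * L ^ 2 / (2 * D ^ 2) * cbDist k cstar c) := by
  have hL : 0 < L := hD.trans_le hDL
  have hδ : dist (cstar j) (c j) ≤ cbDist k cstar c := dist_le_cbDist k cstar c j
  have hsqrt : 1 ≤ √2 ∧ √2 ≤ 2 :=
    ⟨Real.one_le_sqrt.2 one_le_two, Real.sqrt_le_iff.2 ⟨zero_le_two, by norm_num⟩⟩
  have hcoef : √2 * L / D ≤ 7 * L ^ 2 / (2 * D ^ 2) := by
    rw [div_le_div_iff₀ hD (by positivity)]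
    nlinarith [mul_le_mul_of_nonneg_right hsqrt.2 (by positivity : 0 ≤ L * (2 * D ^ 2)),
      mul_le_mul_of_nonneg_left hDL (mul_pos hL hD).le, mul_pos (mul_pos hL hL) hD]
  have hcoef' : L / D ≤ √2 * L / D := by
    gcongr
    exact le_mul_of_one_le_left hL.le hsqrt.1
  constructor
  · rintro ⟨hxs, hxc⟩
    calc _ ≤ L / D * dist (cstar j) (c j) :=
          infDist_frontier_Vcell_castSucc_le hD (hcsD j) (hcs j).1 hx hxs
            (dDiag_le_dist_of_mem_Vcell_last hxc j)
      _ ≤ _ := mul_le_mul (hcoef'.trans hcoef) hδ dist_nonneg (by positivity)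
  · rintro ⟨hxs, hxc⟩
    calc _ ≤ √2 * L / D * dist (cstar j) (c j) :=
          infDist_frontier_Vcell_last_le hD (hcsD j) (hcs j) hx hxs
            (dist_lt_dDiag_of_mem_Vcell hxc)
      _ ≤ _ := mul_le_mul hcoef hδ dist_nonneg (by positivity)

/-- Lemma: misclassified points near the diagonal cell are close to the
boundary of their cell.
If all centroids of `c*, c ∈ Ω^k` lie in `A_L` at distance at least `D` from the diagonal,
and `x ∈ A_L` is in `V_j(c*) ∩ V_{k+1}(c)` (resp. `V_{k+1}(c*) ∩ V_j(c)`), then the distance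
from `x` to the topological boundary of `V_j(c*)` (resp. of `V_{k+1}(c*)`) is at most
`(7L²/(2D²)) ‖c* - c‖`. -/
theorem statement10 (L D : ℝ) (hL : 0 < L) (hD : 0 < D) (hDL : D ≤ L)
    (k : ℕ) (hk : 1 ≤ k) (cstar c : Fin k → E2)
    (hcs : ∀ j, cstar j ∈ Omega ∩ ballA L) (hc : ∀ j, c j ∈ Omega ∩ ballA L)
    (hcsD : ∀ j, D ≤ dDiag (cstar j)) (hcD : ∀ j, D ≤ dDiag (c j))
    (x : E2) (hx : x ∈ ballA L) (j : Fin k) :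
    (x ∈ Vcell k cstar j.castSucc ∩ Vcell k c (Fin.last k) →
      Metric.infDist x (frontier (Vcell k cstar j.castSucc)) ≤
        7 * L ^ 2 / (2 * D ^ 2) * cbDist k cstar c) ∧
    (x ∈ Vcell k cstar (Fin.last k) ∩ Vcell k c j.castSucc →
      Metric.infDist x (frontier (Vcell k cstar (Fin.last k))) ≤
        7 * L ^ 2 / (2 * D ^ 2) * cbDist k cstar c) :=
  statement10_general L D hD hDL k cstar c hcs hcsD x hx j

end
end

section
/- Let B be a measurable space and let μ, ν be finite measures on B with μ(B) > 0 and ν(B) > 0. Set m := min(μ(B), ν(B)), μ̃ := μ/μ(B) and ν̃ := ν/ν(B). Then for every finite measurable partition 𝒮 of B, one has m·Σ_{S∈𝒮} |μ̃(S) − ν̃(S)| ≤ |μ(B) − ν(B)| + Σ_{S∈𝒮} |μ(S) − ν(S)|. Moreover, for every measurable S ⊆ B, m·|μ̃(S) − ν̃(S)| ≤ |μ(S) − ν(S)| + (min(μ(S), ν(S))/max(μ(B), ν(B)))·|μ(B) − ν(B)|. -/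
open MeasureTheory ENNReal Set

noncomputable section

/-! With `a = μ(B)`, `b = ν(B)`, `u = μ(S)`, `v = ν(S)`: cross-multiplying gives
`min(a,b)·|u/a - v/b| = |u b - a v| / max(a,b)`, and `u b - a v = a (u - v) + u (b - a)`
bounds the numerator by `max(a,b)·|u - v| + min(u,v)·|a - b|`. Summed over a partition, the
`min(u,v)` add up to at most `a ≤ max(a,b)`, which absorbs the denominator. -/

theorem abs_mul_sub_mul_le {a b u v : ℝ} (ha : 0 ≤ a) (hb : 0 ≤ b) (hu : 0 ≤ u) (hv : 0 ≤ v) :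
    |u * b - a * v| ≤ max a b * |u - v| + min u v * |a - b| := by
  rcases le_total u v with huv | hvu
  · calc |u * b - a * v| = |a * (u - v) + u * (b - a)| := by ring_nf
      _ ≤ a * |u - v| + u * |a - b| := by
          grw [abs_add_le, abs_mul, abs_mul, abs_of_nonneg ha, abs_of_nonneg hu, abs_sub_comm b a]
      _ ≤ max a b * |u - v| + min u v * |a - b| := by
          rw [min_eq_left huv]; gcongr; exact le_max_left a b
  · calc |u * b - a * v| = |b * (u - v) + v * (b - a)| := by ring_nf
      _ ≤ b * |u - v| + v * |a - b| := by
          grw [abs_add_le, abs_mul, abs_mul, abs_of_nonneg hb, abs_of_nonneg hv, abs_sub_comm b a]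
      _ ≤ max a b * |u - v| + min u v * |a - b| := by
          rw [min_eq_right hvu]; gcongr; exact le_max_right a b

theorem min_mul_abs_div_sub_div {a b : ℝ} (ha : 0 < a) (hb : 0 < b) (u v : ℝ) :
    min a b * |u / a - v / b| = |u * b - a * v| / max a b := by
  have hmin : 0 < min a b := lt_min ha hb
  rw [div_sub_div _ _ ha.ne' hb.ne', abs_div, abs_of_pos (mul_pos ha hb), ← min_mul_max a b,
    mul_div_assoc', mul_div_mul_left _ _ hmin.ne']

theorem min_mul_abs_div_sub_div_le {a b u v : ℝ} (ha : 0 < a) (hb : 0 < b) (hu : 0 ≤ u)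
    (hv : 0 ≤ v) : min a b * |u / a - v / b| ≤ |u - v| + min u v / max a b * |a - b| := by
  have hmax : 0 < max a b := lt_max_of_lt_left ha
  rw [min_mul_abs_div_sub_div ha hb, div_le_iff₀ hmax]
  calc |u * b - a * v| ≤ max a b * |u - v| + min u v * |a - b| :=
        abs_mul_sub_mul_le ha.le hb.le hu hv
    _ = (|u - v| + min u v / max a b * |a - b|) * max a b := by field_simp

theorem min_mul_sum_abs_div_sub_div_le {ι : Type*} (s : Finset ι) {u v : ι → ℝ} {a b : ℝ}
    (hu : ∀ i ∈ s, 0 ≤ u i) (hv : ∀ i ∈ s, 0 ≤ v i) (hua : ∑ i ∈ s, u i = a)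
    (ha : 0 < a) (hb : 0 < b) :
    min a b * ∑ i ∈ s, |u i / a - v i / b| ≤ |a - b| + ∑ i ∈ s, |u i - v i| := by
  have hmax : 0 < max a b := lt_max_of_lt_left ha
  have hsum_min : ∑ i ∈ s, min (u i) (v i) ≤ max a b :=
    calc ∑ i ∈ s, min (u i) (v i) ≤ ∑ i ∈ s, u i := Finset.sum_le_sum fun i _ ↦ min_le_left _ _
      _ = a := hua
      _ ≤ max a b := le_max_left a b
  calc min a b * ∑ i ∈ s, |u i / a - v i / b|
      ≤ ∑ i ∈ s, (|u i - v i| + min (u i) (v i) / max a b * |a - b|) := by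
        rw [Finset.mul_sum]
        exact Finset.sum_le_sum fun i hi ↦ min_mul_abs_div_sub_div_le ha hb (hu i hi) (hv i hi)
    _ = (∑ i ∈ s, min (u i) (v i)) / max a b * |a - b| + ∑ i ∈ s, |u i - v i| := by
        rw [Finset.sum_add_distrib, ← Finset.sum_mul, ← Finset.sum_div, add_comm]
    _ ≤ |a - b| + ∑ i ∈ s, |u i - v i| := by
        gcongr
        exact mul_le_of_le_one_left (abs_nonneg _) ((div_le_one hmax).mpr hsum_min)

theorem sum_measureReal_of_partition {α : Type*} [MeasurableSpace α] (μ : Measure α)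
    [IsFiniteMeasure μ] {𝒮 : Finset (Set α)} (hm : ∀ S ∈ 𝒮, MeasurableSet S)
    (hd : (𝒮 : Set (Set α)).PairwiseDisjoint id) (hU : ⋃₀ (𝒮 : Set (Set α)) = univ) :
    ∑ S ∈ 𝒮, μ.real S = μ.real univ := by
  rw [← hU, sUnion_eq_biUnion]
  simpa using (measureReal_biUnion_finset hd hm).symm

/-- Elementary comparison between normalized and unnormalized measures.
With `m = min(μ(B), ν(B))`, `μ̃ = μ/μ(B)`, `ν̃ = ν/ν(B)`: for every finite measurable
partition `𝒮` of `B`, `m Σ_{S∈𝒮} |μ̃(S) - ν̃(S)| ≤ |μ(B) - ν(B)| + Σ_{S∈𝒮} |μ(S) - ν(S)|`,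
and for every measurable `S ⊆ B`,
`m |μ̃(S) - ν̃(S)| ≤ |μ(S) - ν(S)| + (min(μ(S),ν(S))/max(μ(B),ν(B))) |μ(B) - ν(B)|`. -/
theorem statement15 {B : Type} [MeasurableSpace B] (μ ν : Measure B)
    [IsFiniteMeasure μ] [IsFiniteMeasure ν]
    (hμ : 0 < μ Set.univ) (hν : 0 < ν Set.univ) :
    (∀ 𝒮 : Finset (Set B), (∀ S ∈ 𝒮, MeasurableSet S) →
      ((𝒮 : Set (Set B)).PairwiseDisjoint id) → ⋃₀ (𝒮 : Set (Set B)) = Set.univ →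
      (min (μ Set.univ) (ν Set.univ)).toReal *
          ∑ S ∈ 𝒮, |(μ S).toReal / (μ Set.univ).toReal -
                     (ν S).toReal / (ν Set.univ).toReal| ≤
        |(μ Set.univ).toReal - (ν Set.univ).toReal| +
          ∑ S ∈ 𝒮, |(μ S).toReal - (ν S).toReal|) ∧
    (∀ S : Set B, MeasurableSet S →
      (min (μ Set.univ) (ν Set.univ)).toReal *
          |(μ S).toReal / (μ Set.univ).toReal - (ν S).toReal / (ν Set.univ).toReal| ≤
        |(μ S).toReal - (ν S).toReal| +
          (min (μ S) (ν S)).toReal / (max (μ Set.univ) (ν Set.univ)).toReal *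
            |(μ Set.univ).toReal - (ν Set.univ).toReal|) := by
  have ha : 0 < μ.real univ := ENNReal.toReal_pos hμ.ne' (measure_ne_top μ _)
  have hb : 0 < ν.real univ := ENNReal.toReal_pos hν.ne' (measure_ne_top ν _)
  simp only [ENNReal.toReal_min (measure_ne_top μ _) (measure_ne_top ν _),
    ENNReal.toReal_max (measure_ne_top μ _) (measure_ne_top ν _)]
  refine ⟨fun 𝒮 hm hd hU ↦ ?_, fun S _ ↦ ?_⟩
  · exact min_mul_sum_abs_div_sub_div_le 𝒮 (fun _ _ ↦ toReal_nonneg) (fun _ _ ↦ toReal_nonneg)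
      (sum_measureReal_of_partition μ hm hd hU) ha hb
  · exact min_mul_abs_div_sub_div_le ha hb toReal_nonneg toReal_nonneg

end
end
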